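/- Let (a_k)_{k∈ℕ} and (b_k)_{k∈ℕ} be sequences of complex numbers such that ∑_k a_k and ∑_k b_k converge in ℂ and ∑_k |a_k|² < ∞, ∑_k |b_k|² < ∞. If ∑_{k=0}^∞ a_k/(1 − a_k·z) = ∑_{k=0}^∞ b_k/(1 − b_k·z) for every z ∈ ℂ satisfying a_k·z ≠ 1 and b_k·z ≠ 1 for all k, then for every c ∈ ℂ with c ≠ 0 one has card{k ∈ ℕ : a_k = c} = card{k ∈ ℕ : b_k = c}; that is, the limit function determines the nonzero terms of the sequence together with their multiplicities. -/

import Mathlib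

open Filter Topology

/-!
Writing `a / (1 - a z) = a + z a² / (1 - a z)` gives `F z = ∑ a_k + z ∑ a_k² / (1 - a_k z)`, where
the second series converges absolutely, and boundedly near any `w` with `a_k w ≠ 1` for all `k`,
because `a_k → 0` and `∑ |a_k|² < ∞`. Near `c⁻¹` only the `m = #{k | a_k = c}` terms with
`a_k = c` blow up, so `(1 - c z) F z → c m` as `z → c⁻¹` through the points where every term is
defined. Those points, for `a` and for `b` at once, have countable complement and hence accumulate
at `c⁻¹`; there `F = G`, so the two limits, and the two multiplicities, agree.
-/

theorem tendsto_zero_of_tendsto_sum_range {E : Type*} [AddCommGroup E] [TopologicalSpace E]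
    [IsTopologicalAddGroup E] {a : ℕ → E} {S : E}
    (h : Tendsto (fun N => ∑ k ∈ Finset.range N, a k) atTop (𝓝 S)) :
    Tendsto a atTop (𝓝 0) := by
  simpa [Finset.sum_range_succ] using (h.comp (tendsto_add_atTop_nat 1)).sub h

theorem exists_pos_eventually_le_norm_one_sub_mul {ι R : Type*} [NormedRing R] [Nontrivial R]
    {u : ι → R} (hu : Tendsto u cofinite (𝓝 0)) {w : R} (hw : ∀ i, u i * w ≠ 1) :
    ∃ ε > 0, ∀ᶠ z in 𝓝 w, ∀ i, ε ≤ ‖1 - u i * z‖ := by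
  -- `{0} ∪ range u` is compact, so the tube lemma makes the bound at `w` uniform near `w`.
  have hK := hu.isCompact_insert_range_of_cofinite
  have hKw : ∀ x ∈ insert 0 (Set.range u), 0 < ‖1 - x * w‖ := by
    rintro x (rfl | ⟨i, rfl⟩)
    · simp
    · exact norm_pos_iff.2 (sub_ne_zero.2 (hw i).symm)
  obtain ⟨ε, hε, hεK⟩ := hK.exists_forall_le' (by fun_prop) hKw
  refine ⟨ε / 2, half_pos hε, ?_⟩
  have hnear := hK.eventually_forall_of_forall_eventually (x₀ := w)
    (P := fun z x => ε / 2 < ‖1 - x * z‖) fun x hx =>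
      continuousAt_const.eventually_lt
        (by fun_prop : Continuous fun p : R × R => ‖1 - p.2 * p.1‖).continuousAt
        (show ε / 2 < ‖1 - x * w‖ by linarith [hεK x hx])
  filter_upwards [hnear] with z hz i
  exact (hz _ (Set.mem_insert_of_mem _ ⟨i, rfl⟩)).le

section NormedField

variable {ι 𝕜 : Type*} [NormedField 𝕜] {a : ι → 𝕜}

theorem exists_pos_eventually_norm_sq_div_one_sub_mul_le (ha : Tendsto a cofinite (𝓝 0))
    {w : 𝕜} (hw : ∀ i, a i * w ≠ 1) :
    ∃ ε > 0, ∀ᶠ z in 𝓝 w, ∀ i, ‖a i ^ 2 / (1 - a i * z)‖ ≤ ‖a i‖ ^ 2 / ε := by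
  obtain ⟨ε, hε, hz⟩ := exists_pos_eventually_le_norm_one_sub_mul ha hw
  refine ⟨ε, hε, hz.mono fun z hz i => ?_⟩
  rw [norm_div, norm_pow]
  exact div_le_div_of_nonneg_left (by positivity) hε (hz i)

theorem summable_sq_div_one_sub_mul [CompleteSpace 𝕜] (ha : Tendsto a cofinite (𝓝 0))
    (hasq : Summable fun i => ‖a i‖ ^ 2) {z : 𝕜} (hz : ∀ i, a i * z ≠ 1) :
    Summable fun i => a i ^ 2 / (1 - a i * z) := by
  obtain ⟨ε, -, hε⟩ := exists_pos_eventually_norm_sq_div_one_sub_mul_le ha hz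
  exact .of_norm_bounded (hasq.div_const ε) hε.self_of_nhds

theorem isBoundedUnder_norm_tsum_sq_div_one_sub_mul (ha : Tendsto a cofinite (𝓝 0))
    (hasq : Summable fun i => ‖a i‖ ^ 2) {w : 𝕜} (hw : ∀ i, a i * w ≠ 1) :
    IsBoundedUnder (· ≤ ·) (𝓝 w) fun z => ‖∑' i, a i ^ 2 / (1 - a i * z)‖ := by
  obtain ⟨ε, -, hε⟩ := exists_pos_eventually_norm_sq_div_one_sub_mul_le ha hw
  exact isBoundedUnder_of_eventually_le (hε.mono fun z hz =>
    tsum_of_norm_bounded (hasq.div_const ε).hasSum hz)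

theorem div_one_sub_mul_eq_add {x z : 𝕜} (h : x * z ≠ 1) :
    x / (1 - x * z) = x + z * (x ^ 2 / (1 - x * z)) := by
  have : 1 - x * z ≠ 0 := sub_ne_zero.2 h.symm
  field_simp
  ring

end NormedField

def poleFree (a : ℕ → ℂ) : Set ℂ := {z | ∀ k, a k * z ≠ 1}

theorem countable_compl_poleFree (a : ℕ → ℂ) : (poleFree a)ᶜ.Countable := by
  refine (Set.countable_range fun k => (a k)⁻¹).mono fun z hz => ?_
  obtain ⟨k, hk⟩ : ∃ k, a k * z = 1 := by simpa [poleFree] using hz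
  exact ⟨k, (eq_inv_of_mul_eq_one_right hk).symm⟩

theorem tendsto_sum_range_div_one_sub_mul {a : ℕ → ℂ} {S : ℂ}
    (hS : Tendsto (fun N => ∑ k ∈ Finset.range N, a k) atTop (𝓝 S))
    (hasq : Summable fun k => ‖a k‖ ^ 2) {z : ℂ} (hz : z ∈ poleFree a) :
    Tendsto (fun N => ∑ k ∈ Finset.range N, a k / (1 - a k * z)) atTop
      (𝓝 (S + z * ∑' k, a k ^ 2 / (1 - a k * z))) := by
  have ha : Tendsto a cofinite (𝓝 0) :=
    Nat.cofinite_eq_atTop ▸ tendsto_zero_of_tendsto_sum_range hS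
  simp only [div_one_sub_mul_eq_add (hz _), Finset.sum_add_distrib, ← Finset.mul_sum]
  exact hS.add ((summable_sq_div_one_sub_mul ha hasq hz).hasSum.tendsto_sum_nat.const_mul z)

theorem tendsto_one_sub_mul_mul_nhdsWithin_inv {a : ℕ → ℂ} {S : ℂ}
    (hS : Tendsto (fun N => ∑ k ∈ Finset.range N, a k) atTop (𝓝 S))
    (hasq : Summable fun k => ‖a k‖ ^ 2) {F : ℂ → ℂ}
    (hF : ∀ z ∈ poleFree a,
      Tendsto (fun N => ∑ k ∈ Finset.range N, a k / (1 - a k * z)) atTop (𝓝 (F z)))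
    {c : ℂ} (hc : c ≠ 0) :
    Tendsto (fun z => (1 - c * z) * F z) (𝓝[poleFree a] c⁻¹)
      (𝓝 (c * Nat.card {k | a k = c})) := by
  have ha : Tendsto a cofinite (𝓝 0) :=
    Nat.cofinite_eq_atTop ▸ tendsto_zero_of_tendsto_sum_range hS
  have hfin : {k | a k = c}.Finite := by
    simpa using (ha.eventually_ne hc.symm : ∀ᶠ k in cofinite, a k ≠ c)
  set A := hfin.toFinset
  have hA : ∀ k, k ∈ A ↔ a k = c := by simp [A]
  set T : ℂ → ℂ := fun z => ∑' k : ↑(↑A : Set ℕ)ᶜ, a k ^ 2 / (1 - a k * z)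
  have hdecomp : ∀ z ∈ poleFree a, (1 - c * z) * F z
      = (1 - c * z) * S + z * (A.card * c ^ 2) + (1 - c * z) * z * T z := by
    intro z hz
    have hsumA : (1 - c * z) * ∑ k ∈ A, a k ^ 2 / (1 - a k * z) = A.card * c ^ 2 := by
      rw [Finset.mul_sum, Finset.sum_congr rfl fun k hk => ?_, Finset.sum_const, nsmul_eq_mul]
      rw [(hA k).1 hk, mul_div_cancel₀ _ (sub_ne_zero.2 ((hA k).1 hk ▸ hz k).symm)]
    rw [tendsto_nhds_unique (hF z hz) (tendsto_sum_range_div_one_sub_mul hS hasq hz),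
      ← (summable_sq_div_one_sub_mul ha hasq hz).sum_add_tsum_compl (s := A)]
    linear_combination z * hsumA
  have hT : IsBoundedUnder (· ≤ ·) (𝓝[poleFree a] c⁻¹) (fun z => ‖T z‖) := by
    refine IsBoundedUnder.mono nhdsWithin_le_nhds
      (isBoundedUnder_norm_tsum_sq_div_one_sub_mul
        (ha.comp Subtype.val_injective.tendsto_cofinite) (hasq.subtype _) fun k hk => ?_)
    rw [mul_inv_eq_one₀ hc] at hk
    exact k.2 ((hA k).2 hk)
  have hz : Tendsto (fun z => z) (𝓝[poleFree a] c⁻¹) (𝓝 c⁻¹) :=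
    tendsto_nhdsWithin_of_tendsto_nhds tendsto_id
  have hpole : Tendsto (fun z => 1 - c * z) (𝓝[poleFree a] c⁻¹) (𝓝 0) := by
    simpa [hc] using (tendsto_const_nhds (x := (1 : ℂ))).sub (hz.const_mul c)
  have hpole' : Tendsto (fun z => (1 - c * z) * z) (𝓝[poleFree a] c⁻¹) (𝓝 0) := by
    simpa using hpole.mul hz
  have hlim := ((hpole.mul_const S).add (hz.mul_const (A.card * c ^ 2))).add
    (hpole'.zero_mul_isBoundedUnder_le hT)
  rw [Nat.card_eq_card_finite_toFinset hfin]
  convert hlim.congr' (eventually_nhdsWithin_of_forall fun z hz => (hdecomp z hz).symm) using 2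
  field_simp
  ring

/-- Lemma 4.1 (final part): the limit function `z ↦ ∑ a_k / (1 - a_k z)` determines the
non-zero terms of the sequence together with their multiplicities. -/
theorem stmt_2 (a b : ℕ → ℂ)
    (haconv : ∃ S : ℂ, Tendsto (fun N => ∑ k ∈ Finset.range N, a k) atTop (𝓝 S))
    (hbconv : ∃ S : ℂ, Tendsto (fun N => ∑ k ∈ Finset.range N, b k) atTop (𝓝 S))
    (hasq : Summable fun k => ‖a k‖ ^ 2)
    (hbsq : Summable fun k => ‖b k‖ ^ 2)
    (F G : ℂ → ℂ)
    (hF : ∀ z : ℂ, (∀ k, a k * z ≠ 1) →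
      Tendsto (fun N => ∑ k ∈ Finset.range N, a k / (1 - a k * z)) atTop (𝓝 (F z)))
    (hG : ∀ z : ℂ, (∀ k, b k * z ≠ 1) →
      Tendsto (fun N => ∑ k ∈ Finset.range N, b k / (1 - b k * z)) atTop (𝓝 (G z)))
    (heq : ∀ z : ℂ, (∀ k, a k * z ≠ 1) → (∀ k, b k * z ≠ 1) → F z = G z) :
    ∀ c : ℂ, c ≠ 0 → Nat.card {k : ℕ | a k = c} = Nat.card {k : ℕ | b k = c} := by
  intro c hc
  obtain ⟨Sa, hSa⟩ := haconv
  obtain ⟨Sb, hSb⟩ := hbconv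
  have hdense : Dense (poleFree a ∩ poleFree b) := by
    simpa [Set.compl_union] using
      ((countable_compl_poleFree a).union (countable_compl_poleFree b)).dense_compl ℂ
  have := mem_closure_iff_nhdsWithin_neBot.1 (hdense c⁻¹)
  have hFa := (tendsto_one_sub_mul_mul_nhdsWithin_inv hSa hasq hF hc).mono_left
    (nhdsWithin_mono _ (Set.inter_subset_left (t := poleFree b)))
  have hGb := (tendsto_one_sub_mul_mul_nhdsWithin_inv hSb hbsq hG hc).mono_left
    (nhdsWithin_mono _ (Set.inter_subset_right (s := poleFree a)))
  have hFG : ∀ᶠ z in 𝓝[poleFree a ∩ poleFree b] c⁻¹, (1 - c * z) * F z = (1 - c * z) * G z :=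
    eventually_nhdsWithin_of_forall fun z hz => by rw [heq z hz.1 hz.2]
  exact_mod_cast mul_left_cancel₀ hc (tendsto_nhds_unique (hFa.congr' hFG) hGb)
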